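/- arXiv:math/0506626 — 2 statements merged into one kernel-verified Lean document; each statement's English description precedes it below -/
import Mathlib

section
/- The infinite sum ∑_{k=1}^∞ (H_{k+1} − 1)/(k(k+1)) equals 1. -/
open Filter Finset

/-- The `j`-th harmonic number `H_j = ∑_{i=1}^j 1/i`. -/
noncomputable def harmonicNumber (j : ℕ) : ℝ := ∑ i ∈ Finset.Icc 1 j, (1 : ℝ) / i

lemma harmonicNumber_eq (j : ℕ) : harmonicNumber j = (harmonic j : ℝ) := by
  rw [harmonicNumber, harmonic_eq_sum_Icc]
  push_cast
  simp [one_div]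

lemma harmonicNumber_succ (j : ℕ) :
    harmonicNumber (j + 1) = harmonicNumber j + 1 / (j + 1) := by
  simp [harmonicNumber_eq, harmonic_succ]

lemma harmonicNumber_one : harmonicNumber 1 = 1 := by
  simp [harmonicNumber_eq, harmonic_succ]

lemma partial_sum (n : ℕ) :
    ∑ k ∈ Finset.range n, (harmonicNumber ((k + 1) + 1) - 1) / ((k + 1) * ((k + 1) + 1))
      = 1 - harmonicNumber (n + 1) / (n + 1) := by
  induction n with
  | zero => simp [harmonicNumber_one]
  | succ n ih =>
    rw [Finset.sum_range_succ, ih, harmonicNumber_succ (n+1)]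
    have h1 : ((n:ℝ) + 1) ≠ 0 := by positivity
    have h2 : ((n:ℝ) + 1 + 1) ≠ 0 := by positivity
    push_cast
    field_simp
    ring

lemma harm_div_tendsto :
    Tendsto (fun n : ℕ => harmonicNumber (n + 1) / (n + 1)) atTop (nhds 0) := by
  have hlog : Tendsto (fun n : ℕ => Real.log ((n:ℝ)+1) / ((n:ℝ)+1)) atTop (nhds 0) := by
    have := Real.isLittleO_log_id_atTop.tendsto_div_nhds_zero
    exact this.comp (tendsto_atTop_add_const_right atTop 1 tendsto_natCast_atTop_atTop)
  have hone : Tendsto (fun n : ℕ => 1 / ((n:ℝ)+1)) atTop (nhds 0) := by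
    exact tendsto_one_div_add_atTop_nhds_zero_nat
  have hsum := hone.add hlog
  rw [add_zero] at hsum
  apply squeeze_zero (fun n => ?_) (fun n => ?_) hsum
  · have : 0 < harmonicNumber (n+1) := by
      rw [harmonicNumber_eq]; exact_mod_cast harmonic_pos (Nat.succ_ne_zero n)
    positivity
  · have hb : harmonicNumber (n+1) ≤ 1 + Real.log ((n:ℝ)+1) := by
      rw [harmonicNumber_eq]
      have := harmonic_le_one_add_log (n+1)
      push_cast at this ⊢
      linarith
    rw [← add_div]
    gcongr

theorem theta_point_masses_sum_to_one :
    ∑' k : ℕ, (harmonicNumber ((k + 1) + 1) - 1) / ((k + 1) * ((k + 1) + 1)) = 1 := by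
  have hnonneg : ∀ k : ℕ, 0 ≤ (harmonicNumber ((k + 1) + 1) - 1) / ((k + 1) * ((k + 1) + 1)) := by
    intro k
    apply div_nonneg _ (by positivity)
    have : (1:ℝ) ≤ harmonicNumber (k + 2) := by
      rw [harmonicNumber_eq]
      have : harmonic 1 ≤ harmonic (k + 2) := by
        apply Finset.sum_le_sum_of_subset_of_nonneg
        · exact Finset.range_subset_range.mpr (by omega)
        · intros; positivity
      have h1 : harmonic 1 = 1 := by simp
      rw [h1] at this
      exact_mod_cast this
    linarith
  have h : HasSum (fun k : ℕ => (harmonicNumber ((k + 1) + 1) - 1) / ((k + 1) * ((k + 1) + 1))) 1 := by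
    rw [hasSum_iff_tendsto_nat_of_nonneg hnonneg]
    have := harm_div_tendsto
    have h2 : Tendsto (fun n : ℕ => 1 - harmonicNumber (n + 1) / (n + 1)) atTop (nhds 1) := by
      simpa using (tendsto_const_nhds (x := (1:ℝ))).sub this
    refine h2.congr fun n => ?_
    rw [partial_sum]
  exact h.tsum_eq
end

section
/- For real z with 0 < |z| < 1, the power series ∑_{k=1}^∞ (2/((k+1)(k+2))) z^k equals (2z − z² − 2(1−z)·log(1/(1−z)))/z². -/
/-! Partial fractions, `2 / ((k + 2) (k + 3)) = 2 / (k + 2) - 2 / (k + 3)`, split the series into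
`2 / z` and `2 / z²` times tails of the logarithm series `-log (1 - z) = ∑_{n ≥ 1} zⁿ / n`. -/

open Real

theorem Real.hasSum_pow_add_two_div_log_of_abs_lt_one {x : ℝ} (h : |x| < 1) :
    HasSum (fun n : ℕ => x ^ (n + 2) / (n + 2)) (-log (1 - x) - x) := by
  simpa [add_assoc, one_add_one_eq_two] using
    (hasSum_nat_add_iff' 1).mpr (hasSum_pow_div_log_of_abs_lt_one h)

theorem Real.hasSum_pow_add_three_div_log_of_abs_lt_one {x : ℝ} (h : |x| < 1) :
    HasSum (fun n : ℕ => x ^ (n + 3) / (n + 3)) (-log (1 - x) - x - x ^ 2 / 2) := by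
  have := (hasSum_nat_add_iff' 2).mpr (hasSum_pow_div_log_of_abs_lt_one h)
  norm_num [Finset.sum_range_succ, add_assoc] at this
  rwa [sub_sub]

theorem increment_generating_function (z : ℝ) (h0 : 0 < |z|) (h1 : |z| < 1) :
    ∑' k : ℕ, ((2 : ℝ) / (((k + 1) + 1) * ((k + 1) + 2))) * z ^ (k + 1)
      = (2 * z - z ^ 2 - 2 * (1 - z) * Real.log (1 / (1 - z))) / z ^ 2 := by
  have hz : z ≠ 0 := abs_pos.mp h0
  have partial_fractions (k : ℕ) : (2 : ℝ) / ((k + 1 + 1) * (k + 1 + 2)) * z ^ (k + 1) =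
      2 / z * (z ^ (k + 2) / (k + 2)) - 2 / z ^ 2 * (z ^ (k + 3) / (k + 3)) := by
    field_simp
    ring
  have hsum := ((hasSum_pow_add_two_div_log_of_abs_lt_one h1).mul_left (2 / z)).sub
    ((hasSum_pow_add_three_div_log_of_abs_lt_one h1).mul_left (2 / z ^ 2))
  rw [tsum_congr partial_fractions, hsum.tsum_eq, one_div, log_inv]
  field_simp
  ring
end
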